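/- If x_p(d-1,n) = 0 (with definitions as above), then ⌊(d-n+p)/2⌋ ≤ α_p(d,n) ≤ ⌊(d-n+p+1)/2⌋. -/

import Mathlib

def aP (n p : ℤ) : ℤ := (n - p).fdiv 2 + 1
def xP (p n d : ℤ) : ℤ := (d - aP n p).fdiv (n + p - 1)
def tP (p n d : ℤ) : ℤ := d - 1 - xP p n d * (n + p - 1)
def uP (p n d : ℤ) : ℤ := (p - n + 1 + tP p n d).fdiv 2
def alphaP (p n d : ℤ) : ℤ :=
  xP p n d * (xP p n d - 1) * (n + p - 1) / 2 + xP p n d * (tP p n d + p) + uP p n d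

/-
Since `x_p(d-1,n) = 0`, the number `d - a_p^n` lies in `[1, n+p-1]`, so `x_p(d,n)` is `0`, or `1`
exactly when `d = a_p^n + n + p - 1`. For `x_p = 0` one gets `α_p(d,n) = ⌊(d-n+p)/2⌋`; for
`x_p = 1` one gets `α_p(d,n) = d - n + ⌊(d-2n+1)/2⌋`, and substituting `d = ⌊(n-p)/2⌋ + n + p`
makes both bounds a parity check on `n - p`.
-/

theorem Int.fdiv_two (a : ℤ) : a.fdiv 2 = a / 2 :=
  Int.fdiv_eq_ediv_of_nonneg a zero_le_two

variable {n p d : ℤ}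

theorem xP_eq_iff (hm : 0 < n + p - 1) {k : ℤ} :
    xP p n d = k ↔
      k * (n + p - 1) ≤ d - aP n p ∧ d - aP n p < k * (n + p - 1) + (n + p - 1) := by
  rw [xP, Int.fdiv_eq_ediv_of_nonneg _ hm.le, Int.ediv_eq_iff_of_pos hm]

theorem alphaP_of_xP_eq_zero (h : xP p n d = 0) : alphaP p n d = (d - n + p).fdiv 2 := by
  simp only [alphaP, uP, tP, h, zero_mul, Int.zero_ediv]
  ring_nf

theorem alphaP_of_xP_eq_one (h : xP p n d = 1) :
    alphaP p n d = d - n + (d - 2 * n + 1).fdiv 2 := by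
  simp only [alphaP, uP, tP, h, sub_self, mul_zero, zero_mul, Int.zero_ediv]
  ring_nf

theorem stmt10_general (n p d : ℤ) (hn : 3 ≤ n) (hp : 0 ≤ p)
    (hx : xP p n (d - 1) = 0) :
    (d - n + p).fdiv 2 ≤ alphaP p n d ∧ alphaP p n d ≤ (d - n + p + 1).fdiv 2 := by
  have hm : 0 < n + p - 1 := by omega
  have hrange := (xP_eq_iff hm).1 hx
  have ha : aP n p = (n - p) / 2 + 1 := by rw [aP, Int.fdiv_two]
  rcases (show d - aP n p < n + p - 1 ∨ d - aP n p = n + p - 1 by omega) with hlt | heq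
  · rw [alphaP_of_xP_eq_zero ((xP_eq_iff hm).2 (by omega))]
    simp only [Int.fdiv_two]
    omega
  · rw [alphaP_of_xP_eq_one ((xP_eq_iff hm).2 (by omega))]
    simp only [Int.fdiv_two]
    omega

theorem stmt10 (n p d : ℤ) (hn : 3 ≤ n) (hp : 0 ≤ p) (hd : aP n p + 1 ≤ d)
    (hx : xP p n (d - 1) = 0) :
    (d - n + p).fdiv 2 ≤ alphaP p n d ∧ alphaP p n d ≤ (d - n + p + 1).fdiv 2 :=
  stmt10_general n p d hn hp hx
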